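/- arXiv:1509.03954 — 8 statements merged into one kernel-verified Lean document; each statement's English description precedes it below -/
import Mathlib

section
/- For nonnegative integers a ≥ b, the Gauss polynomial (q-binomial coefficient) binom(a,b)_q = ∏_{i=0}^{b-1} (1-q^{a-i})/(1-q^{b-i}) equals the generating function ∑_z q^{|z|}, where the sum ranges over all partitions z with at most a-b parts, each part at most b, and |z| denotes the sum of the parts of z. -/
open Finset Polynomial

noncomputable def gaussS (n b : ℕ) : Polynomial ℤ :=
  ∑ z ∈ Finset.univ.filter
      (fun z : Fin n → Fin (b + 1) => ∀ i j : Fin n, i ≤ j → (z j : ℕ) ≤ (z i : ℕ)),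
    (Polynomial.X : Polynomial ℤ) ^ (∑ i, (z i : ℕ))

lemma gaussS_zero_right (n : ℕ) : gaussS n 0 = 1 := by
  unfold gaussS
  have h1 : ∀ z : Fin n → Fin 1, (X : Polynomial ℤ) ^ (∑ i, ((z i : ℕ))) = 1 := by
    intro z
    have : (∑ i, ((z i : ℕ))) = 0 := Finset.sum_eq_zero (fun i _ => by omega)
    rw [this, pow_zero]
  rw [Finset.filter_true_of_mem (fun z _ i j _ => by omega)]
  rw [Finset.sum_congr rfl (fun z _ => h1 z), Finset.sum_const, Finset.card_univ]
  simp

lemma gaussS_zero_left (b : ℕ) : gaussS 0 b = 1 := by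
  unfold gaussS
  have h1 : ∀ z : Fin 0 → Fin (b+1), (X : Polynomial ℤ) ^ (∑ i, ((z i : ℕ))) = 1 := by
    intro z; simp
  rw [Finset.filter_true_of_mem (fun z _ i j _ => absurd i.2 (by omega))]
  rw [Finset.sum_congr rfl (fun z _ => h1 z), Finset.sum_const, Finset.card_univ]
  simp [Fintype.card_pi]

lemma gaussS_rec (n b : ℕ) :
    gaussS (n + 1) (b + 1) = gaussS (n + 1) b + X ^ (b + 1) * gaussS n (b + 1) := by
  classical
  have hsplit := Finset.sum_filter_add_sum_filter_not
    (Finset.univ.filter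
      (fun z : Fin (n+1) → Fin (b+2) => ∀ i j : Fin (n+1), i ≤ j → (z j : ℕ) ≤ (z i : ℕ)))
    (fun z => (z 0 : ℕ) = b + 1)
    (fun z => (Polynomial.X : Polynomial ℤ) ^ (∑ i, (z i : ℕ)))
  have htop :
      ∑ z ∈ (Finset.univ.filter
          (fun z : Fin (n+1) → Fin (b+2) => ∀ i j : Fin (n+1), i ≤ j → (z j : ℕ) ≤ (z i : ℕ))).filter
          (fun z => (z 0 : ℕ) = b + 1),
        (Polynomial.X : Polynomial ℤ) ^ (∑ i, (z i : ℕ)) = X ^ (b+1) * gaussS n (b+1) := by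
    rw [gaussS, Finset.mul_sum]
    apply Finset.sum_nbij' (i := fun z => z ∘ Fin.succ)
      (j := fun w => Fin.cases (Fin.last (b+1)) w)
    · intro z hz
      rw [Finset.mem_filter] at hz ⊢
      obtain ⟨hz1, _⟩ := hz
      rw [Finset.mem_filter] at hz1
      exact ⟨Finset.mem_univ _, fun i j hij => hz1.2 i.succ j.succ (Fin.succ_le_succ_iff.mpr hij)⟩
    · intro w hw
      rw [Finset.mem_filter] at hw ⊢
      refine ⟨Finset.mem_filter.mpr ⟨Finset.mem_univ _, ?_⟩, by simp⟩
      intro i j hij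
      induction i using Fin.cases with
      | zero => simp [Fin.is_le]
      | succ i' =>
        induction j using Fin.cases with
        | zero => exact absurd hij (by simp [Fin.le_zero_iff, Fin.succ_ne_zero])
        | succ j' =>
          simp only [Fin.cases_succ]
          exact hw.2 i' j' (by rwa [Fin.succ_le_succ_iff] at hij)
    · intro z hz
      rw [Finset.mem_filter] at hz
      funext i
      induction i using Fin.cases with
      | zero =>
        simp only [Fin.cases_zero]
        exact Fin.ext (by simp [Fin.val_last, hz.2])
      | succ i' => simp
    · intro w hw
      funext i
      simp
    · intro z hz
      rw [Finset.mem_filter] at hz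
      rw [← pow_add, Fin.sum_univ_succ, hz.2]
      rfl
  have hne :
      ∑ z ∈ (Finset.univ.filter
          (fun z : Fin (n+1) → Fin (b+2) => ∀ i j : Fin (n+1), i ≤ j → (z j : ℕ) ≤ (z i : ℕ))).filter
          (fun z => ¬ (z 0 : ℕ) = b + 1),
        (Polynomial.X : Polynomial ℤ) ^ (∑ i, (z i : ℕ)) = gaussS (n+1) b := by
    rw [gaussS]
    apply Finset.sum_nbij'
      (i := fun z i => (⟨min ((z i : ℕ)) b, by omega⟩ : Fin (b+1)))
      (j := fun w i => Fin.castSucc (w i))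
    · intro z hz
      rw [Finset.mem_filter] at hz
      obtain ⟨hz1, hz2⟩ := hz
      rw [Finset.mem_filter] at hz1
      refine Finset.mem_filter.mpr ⟨Finset.mem_univ _, fun i j hij => ?_⟩
      have := hz1.2 i j hij
      simp only
      omega
    · intro w hw
      rw [Finset.mem_filter] at hw
      refine Finset.mem_filter.mpr ⟨Finset.mem_filter.mpr ⟨Finset.mem_univ _, ?_⟩, ?_⟩
      · intro i j hij
        simpa using hw.2 i j hij
      · have := (w 0).is_le
        simp only [Fin.coe_castSucc]
        omega
    · intro z hz
      rw [Finset.mem_filter] at hz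
      obtain ⟨hz1, hz2⟩ := hz
      rw [Finset.mem_filter] at hz1
      funext i
      have h0 := (z 0).is_le
      have hi0 := hz1.2 0 i (Fin.zero_le i)
      exact Fin.ext (by simp; omega)
    · intro w hw
      funext i
      have := (w i).is_le
      exact Fin.ext (by simp; omega)
    · intro z hz
      rw [Finset.mem_filter] at hz
      obtain ⟨hz1, hz2⟩ := hz
      rw [Finset.mem_filter] at hz1
      have h0 := (z 0).is_le
      congr 1
      apply Finset.sum_congr rfl
      intro i _
      have hi0 := hz1.2 0 i (Fin.zero_le i)
      simp only
      omega
  rw [gaussS, ← hsplit, htop, hne, add_comm]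

lemma gauss_key (b n : ℕ) :
    gaussS n b * ∏ j ∈ Finset.range b, (1 - (X : Polynomial ℤ) ^ (j + 1)) =
    ∏ j ∈ Finset.range b, (1 - (X : Polynomial ℤ) ^ (n + j + 1)) := by
  induction b generalizing n with
  | zero => simp [gaussS_zero_right]
  | succ b ihb =>
    induction n with
    | zero =>
      rw [gaussS_zero_left, one_mul]
      exact Finset.prod_congr rfl (fun j _ => by ring_nf)
    | succ n ihn =>
      have h1 := ihb (n + 1)
      have e3 : (∏ j ∈ Finset.range (b+1), (1 - (X : Polynomial ℤ) ^ (n + j + 1))) =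
          (1 - (X : Polynomial ℤ) ^ (n + 1)) *
            ∏ j ∈ Finset.range b, (1 - (X : Polynomial ℤ) ^ (n + 1 + j + 1)) := by
        rw [Finset.prod_range_succ']
        rw [mul_comm]
        congr 1
        apply Finset.prod_congr rfl; intro j _; ring_nf
      rw [e3] at ihn
      rw [Finset.prod_range_succ] at ihn
      rw [gaussS_rec, Finset.prod_range_succ, Finset.prod_range_succ]
      linear_combination (1 - (X : Polynomial ℤ) ^ (b + 1)) * h1 + X ^ (b + 1) * ihn

/-- The Gauss polynomial `binom(a,b)_q`, defined by the product formula
`∏_{i=0}^{b-1} (1-q^{a-i})/(1-q^{b-i})`, equals the generating function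
`∑_z q^{|z|}` over partitions `z` with at most `a-b` parts, each part at most `b`.
Stated denominator-free: (generating function) · ∏ (1-q^{b-i}) = ∏ (1-q^{a-i}). -/
theorem gauss_polynomial_eq_partition_generating_function (a b : ℕ) (hab : b ≤ a) :
    (∑ z ∈ Finset.univ.filter
        (fun z : Fin (a - b) → Fin (b + 1) => ∀ i j : Fin (a - b), i ≤ j → (z j : ℕ) ≤ (z i : ℕ)),
        (Polynomial.X : Polynomial ℤ) ^ (∑ i, (z i : ℕ))) *
      ∏ i ∈ Finset.range b, (1 - (Polynomial.X : Polynomial ℤ) ^ (b - i)) =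
    ∏ i ∈ Finset.range b, (1 - (Polynomial.X : Polynomial ℤ) ^ (a - i)) := by
  have hD : (∏ i ∈ Finset.range b, (1 - (Polynomial.X : Polynomial ℤ) ^ (b - i))) =
      ∏ j ∈ Finset.range b, (1 - (X : Polynomial ℤ) ^ (j + 1)) := by
    rw [← Finset.prod_range_reflect (fun j => 1 - (X : Polynomial ℤ) ^ (j + 1)) b]
    apply Finset.prod_congr rfl
    intro i hi
    rw [Finset.mem_range] at hi
    congr 2
    omega
  have hN : (∏ i ∈ Finset.range b, (1 - (Polynomial.X : Polynomial ℤ) ^ (a - i))) =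
      ∏ j ∈ Finset.range b, (1 - (X : Polynomial ℤ) ^ ((a - b) + j + 1)) := by
    rw [← Finset.prod_range_reflect (fun j => 1 - (X : Polynomial ℤ) ^ ((a - b) + j + 1)) b]
    apply Finset.prod_congr rfl
    intro i hi
    rw [Finset.mem_range] at hi
    congr 2
    omega
  rw [hD, hN]
  exact gauss_key b (a - b)
end

section
/- Let n ≥ k ≥ 0. There is a bijection between partitions t with at most n-k parts each of size at most k, and permutations σ of {1,...,n} satisfying σ(1) < σ(2) < ... < σ(k) and σ(k+1) < ... < σ(n). The bijection sends t to the permutation σ defined by σ(i) = t'_{k+1-i} + i for i = 1,...,k and σ(i) = i - t_{i-k} for i = k+1,...,n, where t' is the conjugate partition of t. -/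
open Finset

/-- The conjugate partition: `conjP N t j = #{i < N : t i ≥ j}`
(for a partition `t` with at most `N` parts, `j ≥ 1` gives the `j`-th column length). -/
def conjP (N : ℕ) (t : ℕ → ℕ) (j : ℕ) : ℕ :=
  ((Finset.range N).filter (fun i => j ≤ t i)).card

lemma conjP_le (N : ℕ) (t : ℕ → ℕ) (j : ℕ) : conjP N t j ≤ N := by
  classical
  calc ((Finset.range N).filter (fun i => j ≤ t i)).card
      ≤ (Finset.range N).card := Finset.card_filter_le _ _
    _ = N := Finset.card_range N

lemma conjP_anti (N : ℕ) (t : ℕ → ℕ) {j j' : ℕ} (h : j ≤ j') :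
    conjP N t j' ≤ conjP N t j := by
  classical
  apply Finset.card_le_card
  intro i hi
  simp only [Finset.mem_filter] at *
  exact ⟨hi.1, h.trans hi.2⟩

lemma lt_conjP_iff {N : ℕ} {t : ℕ → ℕ} (ht : Antitone t) {m j : ℕ} (hm : m < N) :
    m < conjP N t j ↔ j ≤ t m := by
  classical
  constructor
  · intro h
    by_contra hc
    push_neg at hc
    have hsub : (Finset.range N).filter (fun i => j ≤ t i) ⊆ Finset.range m := by
      intro i hi
      simp only [Finset.mem_filter, Finset.mem_range] at *
      by_contra him
      push_neg at him
      exact absurd (hi.2.trans (ht him)) (not_le.mpr hc)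
    have := Finset.card_le_card hsub
    simp only [conjP, Finset.card_range] at h this
    omega
  · intro h
    have hsub : Finset.range (m + 1) ⊆ (Finset.range N).filter (fun i => j ≤ t i) := by
      intro i hi
      simp only [Finset.mem_filter, Finset.mem_range] at *
      exact ⟨by omega, h.trans (ht (by omega))⟩
    have := Finset.card_le_card hsub
    simp only [Finset.card_range] at this
    exact this

def Fval (n k : ℕ) (t : ℕ → ℕ) (i : ℕ) : ℕ :=
  if i + 1 ≤ k then conjP (n - k) t (k - i) + i else i - t (i - k)

section
variable {n k : ℕ} {t : ℕ → ℕ}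

lemma t_le (ht : Antitone t) (ht0 : t 0 ≤ k) (m : ℕ) : t m ≤ k :=
  le_trans (ht (Nat.zero_le m)) ht0

lemma Fval_lt (hk : k ≤ n) {i : ℕ} (hi : i < n) : Fval n k t i < n := by
  unfold Fval
  split
  · have := conjP_le (n - k) t (k - i); omega
  · omega

lemma Fval_mono1 {i j : ℕ} (hij : i < j) (hj : j < k) :
    Fval n k t i < Fval n k t j := by
  unfold Fval
  rw [if_pos (by omega), if_pos (by omega)]
  have := conjP_anti (n - k) t (show k - j ≤ k - i by omega)
  omega

lemma Fval_mono2 (ht : Antitone t) (ht0 : t 0 ≤ k) {i j : ℕ} (hij : i < j) (hi : k ≤ i) :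
    Fval n k t i < Fval n k t j := by
  unfold Fval
  rw [if_neg (by omega), if_neg (by omega)]
  have h1 : t (j - k) ≤ t (i - k) := ht (by omega)
  have h2 : t (i - k) ≤ k := t_le ht ht0 _
  omega

lemma Fval_cross (ht : Antitone t) (ht0 : t 0 ≤ k) {i j : ℕ} (hi : i < k) (hj : k ≤ j)
    (hjn : j < n) : Fval n k t i ≠ Fval n k t j := by
  unfold Fval
  rw [if_pos (by omega), if_neg (by omega)]
  have hm : j - k < n - k := by omega
  have htm : t (j - k) ≤ k := t_le ht ht0 _
  by_cases hc : k - i ≤ t (j - k)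
  · have := (lt_conjP_iff ht hm).mpr hc
    omega
  · push_neg at hc
    have hC : conjP (n - k) t (k - i) ≤ j - k := by
      by_contra h
      exact absurd ((lt_conjP_iff ht hm).mp (lt_of_not_ge h)) (by omega)
    omega

lemma Fval_ne (ht : Antitone t) (ht0 : t 0 ≤ k) {i j : ℕ} (hij : i < j) (hjn : j < n) :
    Fval n k t i ≠ Fval n k t j := by
  rcases lt_or_ge j k with hj | hj
  · exact (Fval_mono1 hij hj).ne
  · rcases lt_or_ge i k with hi | hi
    · exact Fval_cross ht ht0 hi hj hjn
    · exact (Fval_mono2 ht ht0 hij hi).ne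

end

abbrev PartT (n k : ℕ) := {t : ℕ → ℕ // Antitone t ∧ t 0 ≤ k ∧ ∀ i, n - k ≤ i → t i = 0}

abbrev PermT (n k : ℕ) := {σ : Equiv.Perm (Fin n) //
  (∀ i j : Fin n, i < j → (j : ℕ) < k → σ i < σ j) ∧
  (∀ i j : Fin n, k ≤ (i : ℕ) → i < j → σ i < σ j)}

noncomputable def Fmap (n k : ℕ) (hk : k ≤ n) (t : PartT n k) : PermT n k := by
  refine ⟨Equiv.ofBijective (fun i : Fin n => (⟨Fval n k t.1 i, Fval_lt hk i.2⟩ : Fin n))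
    (Finite.injective_iff_bijective.mp ?_), ?_, ?_⟩
  · intro i j h
    simp only [Fin.mk.injEq] at h
    by_contra hne
    rcases Nat.lt_or_ge (i : ℕ) (j : ℕ) with hlt | hge
    · exact Fval_ne t.2.1 t.2.2.1 hlt j.2 h
    · have hlt : (j : ℕ) < (i : ℕ) := by
        rcases Nat.lt_or_ge (j : ℕ) (i : ℕ) with h' | h'
        · exact h'
        · exact absurd (Fin.ext (le_antisymm hge h')) (Ne.symm hne)
      exact Fval_ne t.2.1 t.2.2.1 hlt i.2 h.symm
  · intro i j hij hj
    simp only [Equiv.ofBijective_apply, Fin.lt_def]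
    exact Fval_mono1 (by exact hij) hj
  · intro i j hi hij
    simp only [Equiv.ofBijective_apply, Fin.lt_def]
    exact Fval_mono2 t.2.1 t.2.2.1 (by exact hij) hi

lemma Fmap_apply (n k : ℕ) (hk : k ≤ n) (t : PartT n k) (i : Fin n) :
    ((Fmap n k hk t).1 i : ℕ) = Fval n k t.1 i := rfl

lemma perm_le_self {n k : ℕ} (σ : Equiv.Perm (Fin n))
    (hs2 : ∀ i j : Fin n, k ≤ (i : ℕ) → i < j → σ i < σ j) {i : Fin n} (hi : k ≤ (i : ℕ)) :
    (σ i : ℕ) ≤ (i : ℕ) := by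
  have key : ∀ d : ℕ, ∀ j : Fin n, (j : ℕ) = (i : ℕ) + d → (σ i : ℕ) + d ≤ σ j := by
    intro d
    induction d with
    | zero =>
      intro j hj
      have : j = i := Fin.ext (by omega)
      simp [this]
    | succ d ih =>
      intro j hj
      have hj' : (i : ℕ) + d < n := by have := j.2; omega
      have h1 := ih ⟨(i : ℕ) + d, hj'⟩ rfl
      have h2 := hs2 ⟨(i : ℕ) + d, hj'⟩ j (by simpa using by omega) (by rw [Fin.lt_def]; simp; omega)
      rw [Fin.lt_def] at h2
      omega
  have hn : n - 1 < n := by have := i.2; omega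
  have hkey := key (n - 1 - (i : ℕ)) ⟨n - 1, hn⟩ (by simp; have := i.2; omega)
  have hb : (σ ⟨n - 1, hn⟩ : ℕ) < n := (σ _).2
  have := i.2
  omega

lemma Fmap_inj (n k : ℕ) (hk : k ≤ n) : Function.Injective (Fmap n k hk) := by
  intro t s h
  apply Subtype.ext
  funext m
  rcases lt_or_ge m (n - k) with hm | hm
  · have hpos : k + m < n := by omega
    have hv := congrArg (fun σ : PermT n k => ((σ.1 ⟨k + m, hpos⟩ : ℕ))) h
    simp only [Fmap_apply] at hv
    unfold Fval at hv
    rw [if_neg (by omega), if_neg (by omega)] at hv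
    simp only [Nat.add_sub_cancel_left] at hv
    have h1 : t.1 m ≤ k := t_le t.2.1 t.2.2.1 m
    have h2 : s.1 m ≤ k := t_le s.2.1 s.2.2.1 m
    omega
  · rw [t.2.2.2 m hm, s.2.2.2 m hm]

lemma Fmap_surj (n k : ℕ) (hk : k ≤ n) : Function.Surjective (Fmap n k hk) := by
  rintro ⟨σ, hs1, hs2⟩
  -- the candidate partition
  set tσ : ℕ → ℕ := fun m => if h : k + m < n then (k + m) - σ ⟨k + m, h⟩ else 0 with htσ
  have hle : ∀ (m : ℕ) (h : k + m < n), (σ ⟨k + m, h⟩ : ℕ) ≤ k + m := by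
    intro m h
    exact perm_le_self σ hs2 (by simp)
  have hanti : Antitone tσ := by
    apply antitone_nat_of_succ_le
    intro m
    simp only [htσ]
    by_cases h1 : k + (m + 1) < n
    · have h0 : k + m < n := by omega
      rw [dif_pos h1, dif_pos h0]
      have hmono := hs2 ⟨k + m, h0⟩ ⟨k + (m + 1), h1⟩ (by simp) (by rw [Fin.lt_def]; simp)
      rw [Fin.lt_def] at hmono
      omega
    · rw [dif_neg h1]
      omega
  have h0k : tσ 0 ≤ k := by
    simp only [htσ]
    by_cases h : k + 0 < n
    · rw [dif_pos h]; omega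
    · rw [dif_neg h]; omega
  have hvan : ∀ i, n - k ≤ i → tσ i = 0 := by
    intro i hi
    simp only [htσ]
    rw [dif_neg (by omega)]
  set T : PartT n k := ⟨tσ, hanti, h0k, hvan⟩ with hT
  refine ⟨T, ?_⟩
  -- the two permutations agree on the tail positions
  have htail : ∀ (i : Fin n), k ≤ (i : ℕ) → (Fmap n k hk T).1 i = σ i := by
    intro i hi
    apply Fin.ext
    have hv : ((Fmap n k hk T).1 i : ℕ) = Fval n k tσ i := Fmap_apply n k hk T i
    rw [hv]
    unfold Fval
    rw [if_neg (by omega)]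
    have hpos : k + ((i : ℕ) - k) < n := by have := i.2; omega
    have hieq : (⟨k + ((i : ℕ) - k), hpos⟩ : Fin n) = i := Fin.ext (by simp; omega)
    simp only [htσ]
    rw [dif_pos hpos, hieq]
    have := perm_le_self σ hs2 hi
    have := i.2
    omega
  -- the image of the tail positions
  have hkn : ∀ x : Fin k, (x : ℕ) < n := fun x => lt_of_lt_of_le x.2 hk
  have hmn : ∀ m : Fin (n - k), k + (m : ℕ) < n := fun m => by have := m.2; omega
  classical
  set τ : Equiv.Perm (Fin n) := (Fmap n k hk T).1 with hτdef
  set S : Finset (Fin n) :=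
    (Finset.univ.image (fun m : Fin (n - k) => σ ⟨k + (m : ℕ), hmn m⟩))ᶜ with hS
  have hpinj : Function.Injective (fun m : Fin (n - k) => σ ⟨k + (m : ℕ), hmn m⟩) := by
    intro a b hab
    have := σ.injective hab
    have := Fin.mk.injEq .. ▸ this
    exact Fin.ext (by omega)
  have hScard : S.card = k := by
    rw [hS, Finset.card_compl, Finset.card_image_of_injective _ hpinj]
    simp only [Finset.card_univ, Fintype.card_fin]
    omega
  have hmemS : ∀ (ρ : Equiv.Perm (Fin n)), (∀ m : Fin (n - k), ρ ⟨k + (m : ℕ), hmn m⟩ = σ ⟨k + (m : ℕ), hmn m⟩) → ∀ x : Fin k, ρ ⟨(x : ℕ), hkn x⟩ ∈ S := by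
    intro ρ hρ x
    rw [hS, Finset.mem_compl]
    simp only [Finset.mem_image, Finset.mem_univ, true_and]
    rintro ⟨m, hm⟩
    rw [← hρ m] at hm
    have := ρ.injective hm
    have : k + (m : ℕ) = (x : ℕ) := by
      have := congrArg (fun z : Fin n => (z : ℕ)) this
      simpa using this
    have := x.2
    omega
  have hτtail : ∀ m : Fin (n - k), τ ⟨k + (m : ℕ), hmn m⟩ = σ ⟨k + (m : ℕ), hmn m⟩ := by
    intro m
    exact htail _ (by simp)
  have hf : ∀ x : Fin k, σ ⟨(x : ℕ), hkn x⟩ ∈ S := hmemS σ (fun m => rfl)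
  have hg : ∀ x : Fin k, τ ⟨(x : ℕ), hkn x⟩ ∈ S := hmemS τ hτtail
  have hfm : StrictMono (fun x : Fin k => σ ⟨(x : ℕ), hkn x⟩) := by
    intro a b hab
    exact hs1 _ _ (by rw [Fin.lt_def]; exact hab) (by simpa using b.2)
  have hgm : StrictMono (fun x : Fin k => τ ⟨(x : ℕ), hkn x⟩) := by
    intro a b hab
    exact (Fmap n k hk T).2.1 _ _ (by rw [Fin.lt_def]; exact hab) (by simpa using b.2)
  have hfe := Finset.orderEmbOfFin_unique hScard hf hfm
  have hge := Finset.orderEmbOfFin_unique hScard hg hgm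
  have hhead : ∀ x : Fin k, τ ⟨(x : ℕ), hkn x⟩ = σ ⟨(x : ℕ), hkn x⟩ := by
    intro x
    rw [congrFun hge x, congrFun hfe x]
  apply Subtype.ext
  apply Equiv.ext
  intro i
  rcases lt_or_ge (i : ℕ) k with hi | hi
  · have := hhead ⟨(i : ℕ), hi⟩
    simpa using this
  · exact htail i hi

/-- Bijection between partitions `t` with at most `n-k` parts each of size at most `k`
(0-indexed: `t i` is part `i+1`), and permutations `σ` of `Fin n` that are increasing on the
first `k` and on the last `n-k` positions; `σ` sends position `i` (1-indexed `i+1`) to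
`t'_{k+1-i} + i` for `i ≤ k`, and to `i - t_{i-k}` for `i > k`. -/
theorem grassmannian_permutation_bijection (n k : ℕ) (hk : k ≤ n) :
    ∃ e : {t : ℕ → ℕ // Antitone t ∧ t 0 ≤ k ∧ ∀ i, n - k ≤ i → t i = 0} ≃
        {σ : Equiv.Perm (Fin n) //
          (∀ i j : Fin n, i < j → (j : ℕ) < k → σ i < σ j) ∧
          (∀ i j : Fin n, k ≤ (i : ℕ) → i < j → σ i < σ j)},
      ∀ (t : {t : ℕ → ℕ // Antitone t ∧ t 0 ≤ k ∧ ∀ i, n - k ≤ i → t i = 0}) (i : Fin n),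
        (((e t).val i : ℕ)) + 1 =
          if (i : ℕ) + 1 ≤ k then conjP (n - k) t.val (k - (i : ℕ)) + (i : ℕ) + 1
          else (i : ℕ) + 1 - t.val ((i : ℕ) - k) := by
  refine ⟨Equiv.ofBijective (Fmap n k hk) ⟨Fmap_inj n k hk, Fmap_surj n k hk⟩, ?_⟩
  intro t i
  have hv : (((Equiv.ofBijective (Fmap n k hk) ⟨Fmap_inj n k hk, Fmap_surj n k hk⟩) t).val i : ℕ)
      = Fval n k t.val i := rfl
  rw [hv]
  unfold Fval
  split
  · ring
  · have h1 : t.1 ((i : ℕ) - k) ≤ k := t_le t.2.1 t.2.2.1 _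
    omega
end

section
/- Let n ≥ k ≥ 0, let t be a partition with at most n-k parts each of size at most k, and let σ be the corresponding Grassmannian permutation defined by σ(i) = t'_{k+1-i} + i for i ≤ k and σ(i) = i - t_{i-k} for i > k. Then the number of inversions of σ, that is #{(x,y) : 1 ≤ x < y ≤ n, σ(x) > σ(y)}, equals |t|, the sum of the parts of t. -/
open Finset

lemma card_filter_fin_val (n : ℕ) (p : ℕ → Prop) [DecidablePred p] :
    (Finset.univ.filter fun x : Fin n => p x.val).card
      = ((Finset.range n).filter p).card := by
  refine Finset.card_bij (fun x _ => (x : ℕ)) ?_ ?_ ?_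
  · intro x hx
    simp only [mem_filter, mem_univ, true_and] at hx
    simp [mem_filter, x.isLt, hx]
  · intro a ha b hb h
    exact Fin.val_injective h
  · intro m hm
    simp only [mem_filter, mem_range] at hm
    exact ⟨⟨m, hm.1⟩, by simp [hm.2], rfl⟩

/-- If `σ` is the Grassmannian permutation associated to a partition `t` with at most `n-k`
parts each of size at most `k` (via `σ(i) = t'_{k+1-i} + i` for `i ≤ k` and
`σ(i) = i - t_{i-k}` for `i > k`, 1-indexed), then the number of inversions of `σ`
equals `|t|`, the sum of the parts of `t`. -/
theorem grassmannian_permutation_inversions (n k : ℕ) (hk : k ≤ n) (t : ℕ → ℕ)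
    (ht1 : Antitone t) (ht2 : t 0 ≤ k) (ht3 : ∀ i, n - k ≤ i → t i = 0)
    (σ : Equiv.Perm (Fin n))
    (hσ : ∀ i : Fin n, ((σ i : ℕ)) + 1 =
      if (i : ℕ) + 1 ≤ k then conjP (n - k) t (k - (i : ℕ)) + (i : ℕ) + 1
      else (i : ℕ) + 1 - t ((i : ℕ) - k)) :
    (Finset.univ.filter (fun p : Fin n × Fin n => p.1 < p.2 ∧ σ p.2 < σ p.1)).card =
      ∑ i ∈ Finset.range (n - k), t i := by
  have htle : ∀ i, t i ≤ k := fun i => le_trans (ht1 (Nat.zero_le i)) ht2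
  have hσlt : ∀ i : Fin n, (i : ℕ) < k →
      (σ i : ℕ) = conjP (n - k) t (k - (i : ℕ)) + (i : ℕ) := by
    intro i hi
    have h := hσ i
    rw [if_pos (by omega)] at h
    omega
  have hσge : ∀ i : Fin n, k ≤ (i : ℕ) → (σ i : ℕ) = (i : ℕ) - t ((i : ℕ) - k) := by
    intro i hi
    have h := hσ i
    rw [if_neg (by omega)] at h
    have := htle ((i : ℕ) - k)
    omega
  have hcmono : ∀ m m', m ≤ m' → conjP (n - k) t m' ≤ conjP (n - k) t m := by
    intro m m' h
    apply Finset.card_le_card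
    intro i hi
    simp only [mem_filter, mem_range] at hi ⊢
    exact ⟨hi.1, le_trans h hi.2⟩
  have hca : ∀ m j, 1 ≤ m → m ≤ t j → j + 1 ≤ conjP (n - k) t m := by
    intro m j hm hj
    have hjn : j < n - k := by
      by_contra h
      rw [ht3 j (by omega)] at hj; omega
    calc j + 1 = (Finset.range (j + 1)).card := by simp
      _ ≤ _ := by
          apply Finset.card_le_card
          intro i hi
          simp only [mem_range, mem_filter] at hi ⊢
          exact ⟨by omega, le_trans hj (ht1 (by omega))⟩
  have hcb : ∀ m j, t j < m → conjP (n - k) t m ≤ j := by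
    intro m j hj
    calc conjP (n - k) t m ≤ (Finset.range j).card := by
          apply Finset.card_le_card
          intro i hi
          simp only [mem_range, mem_filter] at hi ⊢
          by_contra h
          have : m ≤ t j := le_trans hi.2 (ht1 (by omega))
          omega
      _ = j := by simp
  -- monotonicity on the two blocks
  have hmono1 : ∀ x y : Fin n, (x : ℕ) < (y : ℕ) → (y : ℕ) < k → (σ x : ℕ) < (σ y : ℕ) := by
    intro x y hxy hy
    rw [hσlt x (by omega), hσlt y hy]
    have := hcmono (k - (y : ℕ)) (k - (x : ℕ)) (by omega)
    omega
  have hmono2 : ∀ x y : Fin n, k ≤ (x : ℕ) → (x : ℕ) < (y : ℕ) → (σ x : ℕ) < (σ y : ℕ) := by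
    intro x y hx hxy
    rw [hσge x hx, hσge y (by omega)]
    have h1 : t ((y : ℕ) - k) ≤ t ((x : ℕ) - k) := ht1 (by omega)
    have h2 := htle ((x : ℕ) - k)
    omega
  -- the key inversion criterion
  have key : ∀ y : Fin n, k ≤ (y : ℕ) → ∀ x : Fin n, (x : ℕ) < k →
      ((σ y : ℕ) < (σ x : ℕ) ↔ k - t ((y : ℕ) - k) ≤ (x : ℕ)) := by
    intro y hy x hx
    rw [hσlt x hx, hσge y hy]
    set j := (y : ℕ) - k with hj
    set m := k - (x : ℕ) with hm
    have htjk := htle j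
    constructor
    · intro hlt
      by_contra hcon
      push_neg at hcon
      have htj : t j < m := by omega
      have := hcb m j htj
      omega
    · intro hge
      have htj : m ≤ t j := by omega
      have := hca m j (by omega) htj
      omega
  -- fiberwise count
  rw [Finset.card_eq_sum_card_fiberwise
    (f := Prod.snd) (t := (Finset.univ : Finset (Fin n))) (fun p _ => Finset.mem_univ _)]
  have hfib : ∀ y : Fin n,
      ((Finset.univ.filter (fun p : Fin n × Fin n => p.1 < p.2 ∧ σ p.2 < σ p.1)).filter
        (fun p => p.2 = y)).card = if k ≤ (y : ℕ) then t ((y : ℕ) - k) else 0 := by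
    intro y
    have him : ((Finset.univ.filter (fun p : Fin n × Fin n => p.1 < p.2 ∧ σ p.2 < σ p.1)).filter
        (fun p => p.2 = y))
        = (Finset.univ.filter (fun x : Fin n => x < y ∧ σ y < σ x)).image (fun x => (x, y)) := by
      ext p
      simp only [mem_filter, mem_univ, true_and, mem_image]
      constructor
      · rintro ⟨⟨h1, h2⟩, h3⟩
        exact ⟨p.1, ⟨by rw [← h3]; exact h1, by rw [← h3]; exact h2⟩, by
          rw [← h3]⟩
      · rintro ⟨x, ⟨h1, h2⟩, rfl⟩
        exact ⟨⟨h1, h2⟩, rfl⟩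
    rw [him, Finset.card_image_of_injective _ (fun a b h => by simpa using congrArg Prod.fst h)]
    by_cases hy : k ≤ (y : ℕ)
    · rw [if_pos hy]
      have hset : (Finset.univ.filter (fun x : Fin n => x < y ∧ σ y < σ x))
          = Finset.univ.filter (fun x : Fin n => k - t ((y : ℕ) - k) ≤ (x : ℕ) ∧ (x : ℕ) < k) := by
        ext x
        simp only [mem_filter, mem_univ, true_and, Fin.lt_def]
        constructor
        · rintro ⟨h1, h2⟩
          have hxk : (x : ℕ) < k := by
            by_contra h
            have := hmono2 x y (by omega) h1
            have : (σ y : ℕ) < (σ y : ℕ) := by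
              calc (σ y : ℕ) < (σ x : ℕ) := h2
                _ < (σ y : ℕ) := this
            omega
          exact ⟨(key y hy x hxk).mp h2, hxk⟩
        · rintro ⟨h1, h2⟩
          exact ⟨by omega, (key y hy x h2).mpr h1⟩
      rw [hset, card_filter_fin_val n (fun m => k - t ((y : ℕ) - k) ≤ m ∧ m < k)]
      have : (Finset.range n).filter (fun m => k - t ((y : ℕ) - k) ≤ m ∧ m < k)
          = Finset.Ico (k - t ((y : ℕ) - k)) k := by
        ext m
        simp only [mem_filter, mem_range, mem_Ico]
        omega
      rw [this, Nat.card_Ico]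
      have := htle ((y : ℕ) - k)
      omega
    · rw [if_neg hy]
      rw [Finset.card_eq_zero, Finset.filter_eq_empty_iff]
      intro x _
      rintro ⟨h1, h2⟩
      rw [Fin.lt_def] at h1
      have := hmono1 x y h1 (by omega)
      omega
  rw [Finset.sum_congr rfl (fun y _ => hfib y)]
  rw [Fin.sum_univ_eq_sum_range (fun y => if k ≤ y then t (y - k) else 0) n]
  rw [← Finset.sum_filter]
  have : (Finset.range n).filter (fun y => k ≤ y) = Finset.Ico k n := by
    ext m
    simp only [mem_filter, mem_range, mem_Ico]
    omega
  rw [this, Finset.sum_Ico_eq_sum_range]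
  exact Finset.sum_congr rfl (fun i _ => by simp)
end

section
/- Let n, p, s, d be nonnegative integers with 0 ≤ p < n and n-p ≤ s ≤ n. Let x² = (2y_{p+1}, ..., 2y_n) for a weakly decreasing tuple d = y_{p+1} ≥ y_{p+2} ≥ ... ≥ y_n ≥ 0, and let β ∈ Z^{n-p} be defined by β_i = x²_i + (n-s). Suppose β fits in the (n-p)×p rectangle (i.e., β_1 ≤ p). Then the dual conjugate weight (β')* = (-β'_p, ..., -β'_1) has all entries odd and first entry at most 2d+n-s-p-1 if and only if: 2d = s+p-n, β'_i is odd for all i = n-s+1,...,p, and (if s < n) n-p is odd. -/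
open Finset

/-- The `j`-th column length of the conjugate partition `β'` of
`β = (2y_{p+1} + (n-s), …, 2y_n + (n-s))` (with `y` 0-indexed: `y l` is `y_{p+1+l}`). -/
def betaConj (n p s : ℕ) (y : ℕ → ℕ) (j : ℕ) : ℕ :=
  ((Finset.range (n - p)).filter (fun l => j ≤ 2 * y l + (n - s))).card

lemma betaConj_small (n p s : ℕ) (y : ℕ → ℕ) {j : ℕ} (hj : j ≤ n - s) :
    betaConj n p s y j = n - p := by
  unfold betaConj
  rw [Finset.filter_true_of_mem fun l _ => hj.trans (Nat.le_add_left _ _), Finset.card_range]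

lemma betaConj_big (n p s : ℕ) {y : ℕ → ℕ} (hy : Antitone y) {j : ℕ}
    (hj : 2 * y 0 + (n - s) < j) : betaConj n p s y j = 0 := by
  unfold betaConj
  rw [Finset.card_eq_zero, Finset.filter_eq_empty_iff]
  intro l _
  have : y l ≤ y 0 := hy (Nat.zero_le l)
  omega

lemma betaConj_pos (n p s : ℕ) (y : ℕ → ℕ) (hpn : p < n) {j : ℕ}
    (hj : j ≤ 2 * y 0 + (n - s)) : 1 ≤ betaConj n p s y j := by
  unfold betaConj
  rw [Nat.one_le_iff_ne_zero, ← Nat.pos_iff_ne_zero, Finset.card_pos]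
  exact ⟨0, Finset.mem_filter.mpr ⟨Finset.mem_range.mpr (by omega), hj⟩⟩

/-- Symmetric case, Claim 3 (first equivalence): for `β_i = 2y_{p+i} + (n-s)` fitting in the
`(n-p)×p` rectangle, the dual conjugate weight `(β')* = (-β'_p, …, -β'_1)` has all entries odd
and first entry at most `2d+n-s-p-1` if and only if `2d = s+p-n`, `β'_i` is odd for
`i = n-s+1, …, p`, and `n-p` is odd when `s < n`. -/
theorem symm_claim3_first (n p s d : ℕ) (y : ℕ → ℕ) (hpn : p < n)
    (hs1 : n - p ≤ s) (hs2 : s ≤ n) (hy : Antitone y) (hyd : y 0 = d)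
    (hfit : 2 * y 0 + (n - s) ≤ p) :
    ((∀ i, 1 ≤ i → i ≤ p → Odd (-(betaConj n p s y (p + 1 - i) : ℤ))) ∧
        -(betaConj n p s y p : ℤ) ≤ 2 * (d : ℤ) + (n : ℤ) - (s : ℤ) - (p : ℤ) - 1) ↔
      ((2 * (d : ℤ) = (s : ℤ) + (p : ℤ) - (n : ℤ)) ∧
        (∀ i, n - s + 1 ≤ i → i ≤ p → Odd (betaConj n p s y i)) ∧
        (s < n → Odd (n - p))) := by
  subst hyd
  constructor
  · rintro ⟨hodd, hle⟩
    have hodd' : ∀ j, 1 ≤ j → j ≤ p → Odd (betaConj n p s y j) := by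
      intro j h1 h2
      have := hodd (p + 1 - j) (by omega) (by omega)
      rw [show p + 1 - (p + 1 - j) = j by omega, odd_neg, Int.odd_coe_nat] at this
      exact this
    have h2d : 2 * y 0 + (n - s) = p := by
      by_contra h
      have hlt : 2 * y 0 + (n - s) < p := by omega
      have h0 : betaConj n p s y p = 0 := betaConj_big n p s hy hlt
      rw [h0] at hle
      push_cast at hle
      omega
    refine ⟨by push_cast; omega, fun i h1 h2 => hodd' i (by omega) h2, fun hsn => ?_⟩
    have hp1 : 1 ≤ p := by omega
    have := hodd' 1 le_rfl hp1
    rwa [betaConj_small n p s y (by omega)] at this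
  · rintro ⟨h2d, hoddR, hnp⟩
    have h2d' : 2 * y 0 + (n - s) = p := by omega
    constructor
    · intro i h1 h2
      rw [odd_neg, Int.odd_coe_nat]
      set j := p + 1 - i with hj
      have hj1 : 1 ≤ j := by omega
      have hj2 : j ≤ p := by omega
      rcases le_or_gt j (n - s) with h | h
      · rw [betaConj_small n p s y h]
        exact hnp (by omega)
      · exact hoddR j (by omega) hj2
    · have := betaConj_pos n p s y hpn (j := p) (by omega)
      have : (1 : ℤ) ≤ (betaConj n p s y p : ℤ) := by exact_mod_cast this
      omega
end

section
/- Let n, p, s, d be nonnegative integers with 0 ≤ p < n and n-p ≤ s ≤ n, and let β ∈ Z^{n-p} be given by β_i = 2y_{p+i} + (n-s) for a weakly decreasing tuple d = y_{p+1} ≥ ... ≥ y_n ≥ 0, with β_1 ≤ p. Then the weight (β')* + (0^{s-n+p}, (-1)^{n-s}) has all entries odd and first entry at most 2d+n-s-p-1 if and only if: 2d = s+p-n, β'_i is odd for all i = n-s+1,...,p, and (if s < n) n-p is even. -/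
open Finset

/-- Symmetric case, Claim 3 (second equivalence): for `β_i = 2y_{p+i} + (n-s)` fitting in the
`(n-p)×p` rectangle, the weight `(β')* + (0^{s-n+p}, (-1)^{n-s})` has all entries odd and first
entry at most `2d+n-s-p-1` if and only if `2d = s+p-n`, `β'_i` is odd for `i = n-s+1, …, p`,
and `n-p` is even when `s < n`. -/
theorem symm_claim3_second (n p s d : ℕ) (y : ℕ → ℕ) (hpn : p < n)
    (hs1 : n - p ≤ s) (hs2 : s ≤ n) (hy : Antitone y) (hyd : y 0 = d)
    (hfit : 2 * y 0 + (n - s) ≤ p) :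
    ((∀ i, 1 ≤ i → i ≤ p →
        Odd (-(betaConj n p s y (p + 1 - i) : ℤ) - (if s + p - n < i then 1 else 0))) ∧
        -(betaConj n p s y p : ℤ) - (if s + p - n < 1 then 1 else 0) ≤
          2 * (d : ℤ) + (n : ℤ) - (s : ℤ) - (p : ℤ) - 1) ↔
      ((2 * (d : ℤ) = (s : ℤ) + (p : ℤ) - (n : ℤ)) ∧
        (∀ i, n - s + 1 ≤ i → i ≤ p → Odd (betaConj n p s y i)) ∧
        (s < n → Even (n - p))) := by
  have h1 : ∀ j, j ≤ n - s → betaConj n p s y j = n - p := by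
    intro j hj
    unfold betaConj
    rw [Finset.filter_true_of_mem, Finset.card_range]
    intro l _
    omega
  have h0 : ∀ j, 2 * d + (n - s) < j → betaConj n p s y j = 0 := by
    intro j hj
    unfold betaConj
    rw [Finset.card_eq_zero, Finset.filter_eq_empty_iff]
    intro l _
    have hl := hy (Nat.zero_le l)
    omega
  have hpos : ∀ j, j ≤ 2 * d + (n - s) → 1 ≤ betaConj n p s y j := by
    intro j hj
    unfold betaConj
    rw [Nat.one_le_iff_ne_zero, ← Nat.pos_iff_ne_zero, Finset.card_pos]
    exact ⟨0, Finset.mem_filter.mpr ⟨Finset.mem_range.mpr (by omega), by omega⟩⟩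
  constructor
  · rintro ⟨hA, hB⟩
    have heq : 2 * d + (n - s) = p := by
      rcases Nat.lt_or_ge (n - s) p with hlt | hge
      · have h := hA 1 le_rfl (by omega)
        rw [if_neg (by omega)] at h
        simp only [Nat.add_sub_cancel] at h
        by_contra hne
        have hz : betaConj n p s y p = 0 := h0 p (by omega)
        rw [hz, Int.odd_iff] at h
        omega
      · omega
    refine ⟨by omega, ?_, ?_⟩
    · intro i hi1 hi2
      have h := hA (p + 1 - i) (by omega) (by omega)
      rw [if_neg (by omega)] at h
      have hii : p + 1 - (p + 1 - i) = i := by omega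
      rw [hii, Int.odd_iff] at h
      rw [Nat.odd_iff]
      omega
    · intro hsn
      have h := hA p (by omega) le_rfl
      rw [if_pos (by omega)] at h
      have h1' : betaConj n p s y (p + 1 - p) = n - p := h1 _ (by omega)
      rw [h1', Int.odd_iff] at h
      rw [Nat.even_iff]
      omega
  · rintro ⟨h2d, h2, h3⟩
    have heq : 2 * d + (n - s) = p := by omega
    constructor
    · intro i hi1 hip
      by_cases hc : s + p - n < i
      · rw [if_pos hc]
        rw [h1 (p + 1 - i) (by omega)]
        have hev : Even (n - p) := h3 (by omega)
        rw [Nat.even_iff] at hev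
        rw [Int.odd_iff]
        omega
      · rw [if_neg hc]
        have hodd := h2 (p + 1 - i) (by omega) (by omega)
        rw [Nat.odd_iff] at hodd
        rw [Int.odd_iff]
        omega
    · rcases Nat.lt_or_ge (n - s) p with hlt | hge
      · rw [if_neg (by omega)]
        have := hpos p (by omega)
        omega
      · rw [if_pos (by omega)]
        omega
end

section
/- Let n, p be integers with 0 < 2p < n, set m = ⌊n/2⌋, and fix m-p ≤ s ≤ m. Let y be a weakly decreasing tuple y_1 = ... = y_{p+1} = d ≥ y_{p+2} ≥ ... ≥ y_m ≥ 0 and define β ∈ Z^{n-2p} by β_1 = β_2 = d+n-1-2s and β_{2i-1} = β_{2i} = y_{p+i} + n-1-2s for i = 2,...,m-p (with a final singleton entry if n is odd). Suppose β fits in the (n-2p)×(2p) rectangle. Then the dual conjugate weight (β')* ∈ Z^{2p} satisfies: (β')*_{2i-1} = (β')*_{2i} for all i = 1,...,p and (β')*_1 ≤ d+n-2s-2p, if and only if d = 2s+2p-n+1 and all entries β_i are even. -/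
open Finset

/-- The skew-case partition `β ∈ ℤ^{n-2p}`, `β_{2i-1} = β_{2i} = y_{p+i} + n-1-2s`
(0-indexed: `y l` is `y_{l+1}`, so `β` at 0-based position `j` is `y (p + j/2) + (n-1-2s)`). -/
def betaSkew (n p s : ℕ) (y : ℕ → ℕ) (j : ℕ) : ℤ :=
  (y (p + j / 2) : ℤ) + ((n : ℤ) - 1 - 2 * (s : ℤ))

/-- The `j`-th column length of the conjugate partition `β'` of `β`. -/
def betaConjSkew (n p s : ℕ) (y : ℕ → ℕ) (j : ℕ) : ℕ :=
  ((Finset.range (n - 2 * p)).filter (fun l => (j : ℤ) ≤ betaSkew n p s y l)).card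

/-- Skew case, Claim 3: with `m = ⌊n/2⌋`, `y_1 = ⋯ = y_{p+1} = d`, and
`β_{2i-1} = β_{2i} = y_{p+i} + n-1-2s` a partition fitting in the `(n-2p)×(2p)` rectangle,
the dual conjugate weight `(β')* ∈ ℤ^{2p}` satisfies `(β')*_{2i-1} = (β')*_{2i}` for
`i = 1,…,p` and `(β')*_1 ≤ d+n-2s-2p`, if and only if `d = 2s+2p-n+1` and all entries of `β`
are even. -/
theorem skew_claim3 (n p s d m : ℕ) (y : ℕ → ℕ) (hm : m = n / 2) (hp : 0 < p)
    (h2p : 2 * p < n) (hs1 : m - p ≤ s) (hs2 : s ≤ m)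
    (hy : Antitone y) (hyd : ∀ i ≤ p, y i = d) (hyz : ∀ i, m ≤ i → y i = 0)
    (hpos : ∀ j < n - 2 * p, 0 ≤ betaSkew n p s y j)
    (hfit : betaSkew n p s y 0 ≤ 2 * p) :
    ((∀ i, 1 ≤ i → i ≤ p →
        betaConjSkew n p s y (2 * p + 2 - 2 * i) = betaConjSkew n p s y (2 * p + 1 - 2 * i)) ∧
        -(betaConjSkew n p s y (2 * p) : ℤ) ≤
          (d : ℤ) + (n : ℤ) - 2 * (s : ℤ) - 2 * (p : ℤ)) ↔
      (((d : ℤ) = 2 * (s : ℤ) + 2 * (p : ℤ) - (n : ℤ) + 1) ∧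
        (∀ j < n - 2 * p, Even (betaSkew n p s y j))) := by
  have hb0 : betaSkew n p s y 0 = (d : ℤ) + (n : ℤ) - 1 - 2 * (s : ℤ) := by
    have := hyd p le_rfl
    simp [betaSkew, this]
    ring
  have hmono : ∀ l, betaSkew n p s y l ≤ betaSkew n p s y 0 := by
    intro l
    have h1 : y (p + l / 2) ≤ y p := hy (Nat.le_add_right p (l / 2))
    have h2 : (y (p + l / 2) : ℤ) ≤ (y p : ℤ) := by exact_mod_cast h1
    simp only [betaSkew]
    simp only [Nat.zero_div, Nat.add_zero]
    linarith
  constructor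
  · rintro ⟨hpair, hineq⟩
    have heven : ∀ j < n - 2 * p, Even (betaSkew n p s y j) := by
      intro j hj
      by_contra hodd
      rw [Int.not_even_iff_odd] at hodd
      have hjp : 0 ≤ betaSkew n p s y j := hpos j hj
      have hju : betaSkew n p s y j ≤ 2 * p := le_trans (hmono j) hfit
      obtain ⟨k, hk⟩ := hodd
      -- k as a natural
      have hk0 : 0 ≤ k := by omega
      obtain ⟨t, rfl⟩ := Int.eq_ofNat_of_zero_le hk0
      have htp : t + 1 ≤ p := by omega
      set i := p - t with hi
      have hi1 : 1 ≤ i := by omega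
      have hi2 : i ≤ p := by omega
      have hcard := hpair i hi1 hi2
      have hval1 : ((2 * p + 1 - 2 * i : ℕ) : ℤ) = betaSkew n p s y j := by omega
      have hval2 : ((2 * p + 2 - 2 * i : ℕ) : ℤ) = betaSkew n p s y j + 1 := by omega
      have hss : (Finset.range (n - 2 * p)).filter
            (fun l => ((2 * p + 2 - 2 * i : ℕ) : ℤ) ≤ betaSkew n p s y l) ⊂
          (Finset.range (n - 2 * p)).filter
            (fun l => ((2 * p + 1 - 2 * i : ℕ) : ℤ) ≤ betaSkew n p s y l) := by
        constructor
        · intro x hx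
          simp only [Finset.mem_filter] at hx ⊢
          exact ⟨hx.1, by omega⟩
        · intro hsub
          have hjmem : j ∈ (Finset.range (n - 2 * p)).filter
              (fun l => ((2 * p + 1 - 2 * i : ℕ) : ℤ) ≤ betaSkew n p s y l) := by
            simp [Finset.mem_filter, Finset.mem_range, hj, hval1]
          have := hsub hjmem
          simp only [Finset.mem_filter, Finset.mem_range] at this
          omega
      have := Finset.card_lt_card hss
      simp only [betaConjSkew] at hcard
      omega
    refine ⟨?_, heven⟩
    have he0 : Even (betaSkew n p s y 0) := heven 0 (by omega)
    by_contra hd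
    -- then β_0 ≤ 2p - 2 (since β_0 ≤ 2p, even, and ≠ 2p)
    have hb0le : betaSkew n p s y 0 ≤ 2 * p - 2 := by
      obtain ⟨t, ht⟩ := he0
      omega
    have hzero : betaConjSkew n p s y (2 * p) = 0 := by
      simp only [betaConjSkew, Finset.card_eq_zero, Finset.filter_eq_empty_iff]
      intro l _
      have := hmono l
      push_cast
      omega
    rw [hzero] at hineq
    omega
  · rintro ⟨hd, heven⟩
    constructor
    · intro i hi1 hi2
      simp only [betaConjSkew]
      congr 1
      apply Finset.filter_congr
      intro l hl
      simp only [Finset.mem_range] at hl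
      obtain ⟨t, ht⟩ := heven l hl
      omega
    · have h0 : (0 : ℤ) ≤ (betaConjSkew n p s y (2 * p) : ℤ) := Int.natCast_nonneg _
      omega
end

section
/- For integers n > p ≥ 0, the maximum exponent of q appearing in the polynomial ∑_{s ≡ p (mod 2), 0 ≤ s ≤ p} q^{1 + binom(n-s+1,2) - binom(p-s+2,2)} · binom(⌊(n-s-1)/2⌋, (p-s)/2)_{q^{-4}} · q^{4·⌊(n-s-1)/2 - (p-s)/2⌋·((p-s)/2)} (where each summand is normalized so the q-binomial is evaluated as a polynomial in q^{-4} times its top power to yield a polynomial in q) equals 1 + binom(n+1,2) - binom(p+2,2) if p is even, and 1 + binom(n,2) - binom(p+1,2) if p is odd. -/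
/-!
The summand of index `s` is `T ^ e s` times a polynomial in `T⁻⁴` whose constant term is the
constant term `1` of a Gauss polynomial; so its top exponent is
`e s = 1 + C(n-s+1,2) - C(p-s+2,2)`, with coefficient `1`. Since `C(x+g,2) - C(x,2)` is increasing
in `x` and `n - s + 1 ≥ p - s + 2`, the exponent `e` is largest at the smallest admissible index
`s = p % 2`, and the top coefficients, all equal to `1`, cannot cancel.
-/

open Finset Polynomial LaurentPolynomial

theorem Nat.add_choose_two (x y : ℕ) : (x + y).choose 2 = x.choose 2 + y.choose 2 + x * y := by
  induction y with
  | zero => simp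
  | succ y ih =>
    rw [← add_assoc, Nat.choose_succ_succ', ih, Nat.choose_succ_succ' y, Nat.choose_one_right,
      Nat.choose_one_right]
    ring

theorem Nat.choose_two_add_sub_choose_two_le {x y : ℕ} (hyx : y ≤ x) (g : ℕ) :
    ((y + g).choose 2 : ℤ) - y.choose 2 ≤ ((x + g).choose 2 : ℤ) - x.choose 2 := by
  rw [Nat.add_choose_two, Nat.add_choose_two]
  push_cast
  nlinarith

theorem Polynomial.eval_zero_prod_one_sub_X_pow {R ι : Type*} [CommRing R] {s : Finset ι}
    {k : ι → ℕ} (hk : ∀ i ∈ s, k i ≠ 0) : (∏ i ∈ s, (1 - X ^ k i : R[X])).eval 0 = 1 := by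
  rw [eval_prod]
  exact prod_eq_one fun i hi => by simp [zero_pow (hk i hi)]

theorem Polynomial.coeff_zero_eq_one_of_mul_prod_eq {R ι : Type*} [CommRing R] {f : R[X]}
    {s t : Finset ι} {k m : ι → ℕ} (hk : ∀ i ∈ s, k i ≠ 0) (hm : ∀ i ∈ t, m i ≠ 0)
    (h : f * ∏ i ∈ s, (1 - X ^ k i) = ∏ i ∈ t, (1 - X ^ m i)) : f.coeff 0 = 1 := by
  have := congrArg (eval 0) h
  rwa [eval_mul, eval_zero_prod_one_sub_X_pow hk, eval_zero_prod_one_sub_X_pow hm, mul_one,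
    ← coeff_zero_eq_eval_zero] at this

namespace LaurentPolynomial

theorem coeff_T_mul {R : Type*} [Semiring R] (n c : ℤ) (f : R[T;T⁻¹]) :
    (T n * f).coeff c = f.coeff (c - n) := by
  rw [show (T n : R[T;T⁻¹]) = AddMonoidAlgebra.single n 1 from rfl,
    AddMonoidAlgebra.coeff_single_mul_apply, one_mul, neg_add_eq_sub]

theorem coeff_eval₂_T_of_nonneg {R : Type*} [CommSemiring R] (f : R[X]) {k c : ℤ} (hk : k < 0)
    (hc : 0 ≤ c) :
    (f.eval₂ (algebraMap R R[T;T⁻¹]) (T k)).coeff c = if c = 0 then f.coeff 0 else 0 := by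
  simp only [eval₂_eq_sum_range, T_pow, ← C_eq_algebraMap, ← single_eq_C_mul_T,
    AddMonoidAlgebra.coeff_sum, AddMonoidAlgebra.coeff_single, Finsupp.finsetSum_apply,
    Finsupp.single_apply]
  rw [sum_eq_single_of_mem 0 (mem_range.mpr (Nat.succ_pos _))]
  · simp [eq_comm]
  · intro i _ hi
    rw [if_neg]
    intro h
    have : 0 < i := Nat.pos_of_ne_zero hi
    nlinarith

theorem degree_sum_T_mul_eq {R ι : Type*} [Semiring R] [CharZero R] {F : Finset ι} {e : ι → ℤ}
    {H : ι → R[T;T⁻¹]} {E : ℤ} {s₀ : ι}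
    (hH : ∀ s ∈ F, ∀ c, 0 ≤ c → (H s).coeff c = if c = 0 then 1 else 0)
    (he : ∀ s ∈ F, e s ≤ E) (hs₀ : s₀ ∈ F) (he₀ : e s₀ = E) :
    (∑ s ∈ F, T (e s) * H s).degree = (E : WithBot ℤ) := by
  have hcoeff : ∀ c, E ≤ c →
      (∑ s ∈ F, T (e s) * H s).coeff c = (#{s ∈ F | c = e s} : R) := by
    intro c hc
    rw [AddMonoidAlgebra.coeff_sum, Finsupp.finsetSum_apply, ← sum_boole]
    refine sum_congr rfl fun s hs => ?_
    rw [coeff_T_mul, hH s hs _ (by linarith [he s hs])]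
    exact if_congr sub_eq_zero rfl rfl
  refine le_antisymm (Finset.max_le fun c hc => ?_) (Finset.le_max ?_)
  · by_contra! hlt
    rw [WithBot.coe_lt_coe] at hlt
    refine Finsupp.mem_support_iff.mp hc ?_
    rw [hcoeff c hlt.le, Nat.cast_eq_zero, card_eq_zero, filter_eq_empty_iff]
    exact fun s hs => (he s hs).trans_lt hlt |>.ne'
  · rw [Finsupp.mem_support_iff, hcoeff E le_rfl, Nat.cast_ne_zero, ← pos_iff_ne_zero,
      card_pos]
    exact ⟨s₀, mem_filter.mpr ⟨hs₀, he₀.symm⟩⟩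

end LaurentPolynomial

/-- Degree (top exponent of `q`) of the symmetric-case polynomial
`∑_{s ≡ p (2), 0 ≤ s ≤ p} q^{1+C(n-s+1,2)-C(p-s+2,2)} · binom(⌊(n-s-1)/2⌋,(p-s)/2)_{q^{-4}}`,
where the Gauss polynomial `G a b = binom(a,b)_q` is characterized by the denominator-free
product identity. The maximum exponent is `1+C(n+1,2)-C(p+2,2)` for `p` even and
`1+C(n,2)-C(p+1,2)` for `p` odd. -/
theorem symm_top_exponent (n p : ℕ) (hpn : p < n)
    (G : ℕ → ℕ → Polynomial ℤ)
    (hG : ∀ a b : ℕ, b ≤ a →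
      G a b * ∏ i ∈ Finset.range b, (1 - (Polynomial.X : Polynomial ℤ) ^ (b - i)) =
        ∏ i ∈ Finset.range b, (1 - (Polynomial.X : Polynomial ℤ) ^ (a - i))) :
    (∑ s ∈ (Finset.range (p + 1)).filter (fun s => s % 2 = p % 2),
        LaurentPolynomial.T (1 + ((n - s + 1).choose 2 : ℤ) - ((p - s + 2).choose 2 : ℤ)) *
          Polynomial.eval₂ (algebraMap ℤ (LaurentPolynomial ℤ)) (LaurentPolynomial.T (-4))
            (G ((n - s - 1) / 2) ((p - s) / 2))).coeff.support.max =
      ((if p % 2 = 0 then 1 + ((n + 1).choose 2 : ℤ) - ((p + 2).choose 2 : ℤ)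
        else 1 + (n.choose 2 : ℤ) - ((p + 1).choose 2 : ℤ) : ℤ) : WithBot ℤ) := by
  have hrhs : (if p % 2 = 0 then 1 + ((n + 1).choose 2 : ℤ) - ((p + 2).choose 2 : ℤ)
      else 1 + (n.choose 2 : ℤ) - ((p + 1).choose 2 : ℤ)) =
      1 + ((n - p % 2 + 1).choose 2 : ℤ) - ((p - p % 2 + 2).choose 2 : ℤ) := by
    rcases Nat.mod_two_eq_zero_or_one p with h | h
    · simp [h]
    · rw [if_neg (by omega), h, Nat.sub_add_cancel (by omega),
        show p - 1 + 2 = p + 1 by omega]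
  rw [hrhs]
  refine degree_sum_T_mul_eq (s₀ := p % 2) (fun s hs c hc => ?_) (fun s hs => ?_) ?_ rfl
  · have hsp : s ≤ p := Nat.lt_succ_iff.mp (mem_range.mp (mem_filter.mp hs).1)
    rw [coeff_eval₂_T_of_nonneg _ (by norm_num) hc,
      coeff_zero_eq_one_of_mul_prod_eq (by simp; omega) (by simp; omega)
        (hG _ _ (Nat.div_le_div_right (by omega)))]
  · have hsp : s ≤ p := Nat.lt_succ_iff.mp (mem_range.mp (mem_filter.mp hs).1)
    have hs_parity : s % 2 = p % 2 := (mem_filter.mp hs).2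
    have key := Nat.choose_two_add_sub_choose_two_le (x := n - s + 1) (y := p - s + 2)
      (by omega) (s - p % 2)
    rw [show n - s + 1 + (s - p % 2) = n - p % 2 + 1 by omega,
      show p - s + 2 + (s - p % 2) = p - p % 2 + 2 by omega] at key
    linarith
  · exact mem_filter.mpr ⟨mem_range.mpr (by omega), Nat.mod_mod _ _⟩
end

section
/- For integers m > p ≥ 0 and n = 2m, the degree in q of the polynomial ∑_{s=0}^{p} q^{2(m-p)^2 - (m-p)} · binom(m-1-s, p-s)_{q^4} equals binom(n,2) - binom(2p+2,2) + 1. -/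
open Finset Polynomial


lemma aux_fac (k : ℕ) (hk : 0 < k) :
    (1 - (X : Polynomial ℤ) ^ k).natDegree = k ∧
    (1 - (X : Polynomial ℤ) ^ k).leadingCoeff = -1 := by
  have h : (1 - (X : Polynomial ℤ) ^ k) = -(X ^ k - C 1) := by rw [map_one]; ring
  have hd : (1 - (X : Polynomial ℤ) ^ k).natDegree = k := by
    rw [h, natDegree_neg, natDegree_X_pow_sub_C]
  refine ⟨hd, ?_⟩
  rw [leadingCoeff, hd]
  simp [coeff_one, hk.ne']

lemma aux_prod (g : ℕ → ℕ) (b : ℕ) (h : ∀ i < b, 1 ≤ g i) :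
    (∏ i ∈ Finset.range b, (1 - (X : Polynomial ℤ) ^ (g i))).natDegree
      = ∑ i ∈ Finset.range b, g i ∧
    (∏ i ∈ Finset.range b, (1 - (X : Polynomial ℤ) ^ (g i))).leadingCoeff = (-1) ^ b := by
  have hne : ∀ i ∈ Finset.range b, (1 - (X : Polynomial ℤ) ^ (g i)) ≠ 0 := by
    intro i hi
    have := (aux_fac (g i) (h i (mem_range.mp hi))).2
    intro h0; rw [h0] at this; simp at this
  constructor
  · rw [Polynomial.natDegree_prod _ _ hne]
    exact Finset.sum_congr rfl fun i hi => (aux_fac (g i) (h i (mem_range.mp hi))).1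
  · rw [Polynomial.leadingCoeff_prod]
    rw [Finset.prod_congr rfl fun i hi => (aux_fac (g i) (h i (mem_range.mp hi))).2]
    simp

lemma aux_G (G : ℕ → ℕ → Polynomial ℤ)
    (hG : ∀ a b : ℕ, b ≤ a →
      G a b * ∏ i ∈ Finset.range b, (1 - (Polynomial.X : Polynomial ℤ) ^ (b - i)) =
        ∏ i ∈ Finset.range b, (1 - (Polynomial.X : Polynomial ℤ) ^ (a - i)))
    (a b : ℕ) (hba : b ≤ a) :
    (G a b).Monic ∧ (G a b).natDegree = b * (a - b) := by
  have hPb : ∀ i < b, 1 ≤ b - i := fun i hi => by omega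
  have hPa : ∀ i < b, 1 ≤ a - i := fun i hi => by omega
  obtain ⟨hdP, hlP⟩ := aux_prod (fun i => b - i) b hPb
  obtain ⟨hdQ, hlQ⟩ := aux_prod (fun i => a - i) b hPa
  have hPne : (∏ i ∈ Finset.range b, (1 - (X : Polynomial ℤ) ^ (b - i))) ≠ 0 := by
    intro h0; rw [h0] at hlP; simp at hlP
    exact absurd hlP.symm (by positivity)
  have hQne : (∏ i ∈ Finset.range b, (1 - (X : Polynomial ℤ) ^ (a - i))) ≠ 0 := by
    intro h0; rw [h0] at hlQ; simp at hlQ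
    exact absurd hlQ.symm (by positivity)
  have heq := hG a b hba
  have hGne : G a b ≠ 0 := by
    intro h0; rw [h0, zero_mul] at heq; exact hQne heq.symm
  constructor
  · have := congrArg Polynomial.leadingCoeff heq
    rw [Polynomial.leadingCoeff_mul, hlP, hlQ] at this
    have hne : ((-1 : ℤ) ^ b) ≠ 0 := by positivity
    exact mul_right_cancel₀ hne (by rw [this, one_mul])
  · have hdd := congrArg Polynomial.natDegree heq
    rw [Polynomial.natDegree_mul hGne hPne, hdP, hdQ] at hdd
    have hsum : ∑ i ∈ Finset.range b, (a - i)
        = b * (a - b) + ∑ i ∈ Finset.range b, (b - i) := by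
      rw [Finset.sum_congr rfl (fun i hi => show a - i = (a - b) + (b - i) by
            have := mem_range.mp hi; omega), Finset.sum_add_distrib,
          Finset.sum_const, card_range, smul_eq_mul, Nat.mul_comm]
    omega


/-- For `m > p ≥ 0` and `n = 2m`, the degree in `q` of
`∑_{s=0}^{p} q^{2(m-p)²-(m-p)} · binom(m-1-s, p-s)_{q⁴}` equals
`C(n,2) - C(2p+2,2) + 1`, where `G a b = binom(a,b)_q` is the Gauss polynomial characterized
by the denominator-free product identity. -/
theorem skew_lcd_even (m p : ℕ) (hp : p < m)
    (G : ℕ → ℕ → Polynomial ℤ)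
    (hG : ∀ a b : ℕ, b ≤ a →
      G a b * ∏ i ∈ Finset.range b, (1 - (Polynomial.X : Polynomial ℤ) ^ (b - i)) =
        ∏ i ∈ Finset.range b, (1 - (Polynomial.X : Polynomial ℤ) ^ (a - i))) :
    (∑ s ∈ Finset.range (p + 1),
        (Polynomial.X : Polynomial ℤ) ^ (2 * (m - p) ^ 2 - (m - p)) *
          (G (m - 1 - s) (p - s)).comp ((Polynomial.X : Polynomial ℤ) ^ 4)).natDegree =
      (2 * m).choose 2 - (2 * p + 2).choose 2 + 1 := by
  obtain ⟨d, rfl⟩ : ∃ d, m = p + d + 1 := ⟨m - p - 1, by omega⟩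
  clear hp
  set f : ℕ → Polynomial ℤ := fun s =>
    (X : Polynomial ℤ) ^ (2 * (p + d + 1 - p) ^ 2 - (p + d + 1 - p)) *
      (G (p + d + 1 - 1 - s) (p - s)).comp ((X : Polynomial ℤ) ^ 4) with hf
  -- exponent
  have hmp : p + d + 1 - p = d + 1 := by omega
  have hE : 2 * (p + d + 1 - p) ^ 2 - (p + d + 1 - p) = (d + 1) * (2 * d + 1) := by
    rw [hmp]
    exact Nat.sub_eq_of_eq_add (by ring)
  set D : ℕ := (d + 1) * (2 * d + 1) + p * d * 4 with hD
  -- facts about f s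
  have hfs : ∀ s ≤ p, (f s).Monic ∧
      (f s).natDegree = (d + 1) * (2 * d + 1) + (p - s) * d * 4 := by
    intro s hs
    have hba : p - s ≤ p + d + 1 - 1 - s := by omega
    obtain ⟨hmon, hdeg⟩ := aux_G G hG _ _ hba
    have hcomp_mon : ((G (p + d + 1 - 1 - s) (p - s)).comp ((X : Polynomial ℤ) ^ 4)).Monic :=
      hmon.comp (monic_X_pow 4) (by simp)
    have hcomp_deg : ((G (p + d + 1 - 1 - s) (p - s)).comp ((X : Polynomial ℤ) ^ 4)).natDegree
        = (p - s) * d * 4 := by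
      rw [natDegree_comp, hdeg, natDegree_X_pow]
      congr 2
      omega
    constructor
    · exact (monic_X_pow _).mul hcomp_mon
    · rw [hf]
      rw [Polynomial.natDegree_mul (by exact pow_ne_zero _ X_ne_zero) hcomp_mon.ne_zero,
        natDegree_X_pow, hcomp_deg, hE]
  have hdegle : ∀ s ≤ p, (f s).natDegree ≤ D := by
    intro s hs
    rw [(hfs s hs).2, hD]
    have : (p - s) * d * 4 ≤ p * d * 4 :=
      Nat.mul_le_mul_right _ (Nat.mul_le_mul_right _ (Nat.sub_le p s))
    omega
  -- natDegree of the sum ≤ D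
  have hle : (∑ s ∈ Finset.range (p + 1), f s).natDegree ≤ D :=
    Polynomial.natDegree_sum_le_of_forall_le _ _ fun s hs => hdegle s (by
      have := mem_range.mp hs; omega)
  -- coefficient at D is positive
  have hcoeff_nonneg : ∀ s ∈ Finset.range (p + 1), 0 ≤ (f s).coeff D := by
    intro s hs
    have hs' : s ≤ p := by have := mem_range.mp hs; omega
    rcases lt_or_eq_of_le (hdegle s hs') with h | h
    · rw [Polynomial.coeff_eq_zero_of_natDegree_lt h]
    · rw [← h, (hfs s hs').1.coeff_natDegree]; norm_num
  have hcoeff0 : (f 0).coeff D = 1 := by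
    have h0 : (f 0).natDegree = D := by
      rw [(hfs 0 (Nat.zero_le p)).2, hD, Nat.sub_zero]
    rw [← h0, (hfs 0 (Nat.zero_le p)).1.coeff_natDegree]
  have hcoeff : (1 : ℤ) ≤ (∑ s ∈ Finset.range (p + 1), f s).coeff D := by
    rw [Polynomial.finset_sum_coeff]
    calc (1 : ℤ) = (f 0).coeff D := hcoeff0.symm
      _ ≤ ∑ s ∈ Finset.range (p + 1), (f s).coeff D :=
        Finset.single_le_sum hcoeff_nonneg (mem_range.mpr (Nat.succ_pos p))
  have hge : D ≤ (∑ s ∈ Finset.range (p + 1), f s).natDegree :=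
    Polynomial.le_natDegree_of_ne_zero (by intro h0; rw [h0] at hcoeff; norm_num at hcoeff)
  have hdeg : (∑ s ∈ Finset.range (p + 1), f s).natDegree = D := le_antisymm hle hge
  rw [hdeg]
  -- arithmetic
  have c1 : (2 * (p + d + 1)).choose 2 = (p + d + 1) * (2 * p + 2 * d + 1) := by
    rw [Nat.choose_two_right,
      show 2 * (p + d + 1) * (2 * (p + d + 1) - 1) = 2 * ((p + d + 1) * (2 * p + 2 * d + 1)) by
        have : 2 * (p + d + 1) - 1 = 2 * p + 2 * d + 1 := by omega
        rw [this]; ring,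
      Nat.mul_div_cancel_left _ (by norm_num)]
  have c2 : (2 * p + 2).choose 2 = (p + 1) * (2 * p + 1) := by
    rw [Nat.choose_two_right,
      show (2 * p + 2) * (2 * p + 2 - 1) = 2 * ((p + 1) * (2 * p + 1)) by
        have : 2 * p + 2 - 1 = 2 * p + 1 := by omega
        rw [this]; ring,
      Nat.mul_div_cancel_left _ (by norm_num)]
  rw [c1, c2, hD]
  have hyx : (p + 1) * (2 * p + 1) ≤ (p + d + 1) * (2 * p + 2 * d + 1) :=
    Nat.mul_le_mul (by omega) (by omega)
  zify [hyx]
  ring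
end
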